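/- Let q ∈ ℂ with q ≠ 0, let a₁, a₂, a₃, a₄ and b₁, b₂, b₃ be natural numbers, let z be a natural number with aᵢ ≤ z for all i and z ≤ b_y for all y, and set D = max(z+1, b₁−z, b₂−z, b₃−z). Assume q^{2d} ≠ 1 for all integers d with 1 ≤ d ≤ D. Define the Racah summand T_z = (−1)^z [z+1]_q! / (∏_{i=1}^{4} [z−a_i]_q! · ∏_{y=1}^{3} [b_y−z]_q!). Then T_z = (−1)^z · q^{P(z)} · ∏_{d=2}^{D} Φ_d(q²)^{E_d(z)}, where the integer exponents are E_d(z) = ⌊(z+1)/d⌋ − ∑_{i=1}^{4} ⌊(z−a_i)/d⌋ − ∑_{y=1}^{3} ⌊(b_y−z)/d⌋ and P(z) = (z+1)(−z)/2 − ∑_{i=1}^{4} (z−a_i)(1−(z−a_i))/2 − ∑_{y=1}^{3} (b_y−z)(1−(b_y−z))/2, and Φ_d(q²)^{E_d(z)} denotes the integer (possibly negative) power, well defined since Φ_d(q²) ≠ 0 for 2 ≤ d ≤ D under the stated hypothesis. -/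

import Mathlib

/-- The quantum integer `[n]_q = (qⁿ − q⁻ⁿ)/(q − q⁻¹)`. -/
noncomputable def qint (q : ℂ) (n : ℕ) : ℂ := (q ^ n - q⁻¹ ^ n) / (q - q⁻¹)

/-- The quantum factorial `[n]_q! = ∏_{m=1}^{n} [m]_q`, with `[0]_q! = 1`. -/
noncomputable def qfact (q : ℂ) (n : ℕ) : ℂ := ∏ m ∈ Finset.Icc 1 n, qint q m

/-- The Racah summand of the quantum 6j-symbol:
`T_z = (−1)^z [z+1]_q! / (∏_{i=1}^{4} [z−a_i]_q! · ∏_{y=1}^{3} [b_y−z]_q!)`. -/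
noncomputable def racahSummand (q : ℂ) (a : Fin 4 → ℕ) (b : Fin 3 → ℕ) (z : ℕ) : ℂ :=
  (-1) ^ z * qfact q (z + 1) /
    ((∏ i, qfact q (z - a i)) * ∏ y, qfact q (b y - z))

/-!
With `x = q²` one has `q^(m-1) [m]_q = 1 + x + ⋯ + x^(m-1) = ∏_{1 < d ∣ m} Φ_d(x)`, and among
`1, …, n` exactly `⌊n/d⌋` integers are divisible by `d`; hence
`q^(n choose 2) [n]_q! = ∏_{d=2}^{D} Φ_d(x)^⌊n/d⌋` whenever `n ≤ D`. Substituting this for the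
eight factorials of `T_z` and collecting exponents gives the formula, because
`n(1-n)/2 = -(n choose 2)`.
-/

open Finset Polynomial

theorem Nat.divisors_erase_one_eq_filter_dvd {m D : ℕ} (hm : m ≠ 0) (hmD : m ≤ D) :
    m.divisors.erase 1 = {d ∈ Icc 2 D | d ∣ m} := by
  ext d
  simp only [mem_erase, Nat.mem_divisors, mem_filter, mem_Icc]
  constructor
  · rintro ⟨hd1, hdm, -⟩
    have hd0 := Nat.pos_of_dvd_of_pos hdm (Nat.pos_of_ne_zero hm)
    exact ⟨⟨by omega, (Nat.le_of_dvd (Nat.pos_of_ne_zero hm) hdm).trans hmD⟩, hdm⟩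
  · rintro ⟨⟨hd2, -⟩, hdm⟩
    exact ⟨by omega, hdm, hm⟩

theorem Finset.prod_Icc_two_pow_add_one_div {M : Type*} [CommMonoid M] (f : ℕ → M) {n D : ℕ}
    (hn : n + 1 ≤ D) :
    ∏ d ∈ Icc 2 D, f d ^ ((n + 1) / d) =
      (∏ d ∈ Icc 2 D, f d ^ (n / d)) * ∏ d ∈ (n + 1).divisors.erase 1, f d := by
  simp only [Nat.succ_div, pow_add, prod_mul_distrib, pow_ite, pow_one, pow_zero]
  rw [prod_ite, prod_const_one, mul_one, Nat.divisors_erase_one_eq_filter_dvd n.succ_ne_zero hn]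

theorem Polynomial.eval_cyclotomic_ne_zero_of_pow_ne_one {R : Type*} [CommRing R] {x : R} {d : ℕ}
    (h : x ^ d ≠ 1) : (cyclotomic d R).eval x ≠ 0 := by
  intro h0
  have := eval_dvd (x := x) (cyclotomic.dvd_X_pow_sub_one d R)
  simp only [h0, zero_dvd_iff, eval_sub, eval_pow, eval_X, eval_one, sub_eq_zero] at this
  exact h this

section

variable {q : ℂ}

theorem pow_pred_mul_qint (hq : q ≠ 0) (hq2 : q ^ 2 ≠ 1) (m : ℕ) :
    q ^ (m - 1) * qint q m = ∑ i ∈ range m, (q ^ 2) ^ i := by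
  rcases m with _ | k
  · simp [qint]
  rw [geom_sum_eq hq2, qint, Nat.add_sub_cancel, inv_pow]
  field_simp
  ring

theorem pow_pred_mul_qint_eq_prod_cyclotomic (hq : q ≠ 0) (hq2 : q ^ 2 ≠ 1) {m : ℕ} (hm : 0 < m) :
    q ^ (m - 1) * qint q m = ∏ d ∈ m.divisors.erase 1, (cyclotomic d ℂ).eval (q ^ 2) := by
  rw [pow_pred_mul_qint hq hq2, ← eval_prod, prod_cyclotomic_eq_geom_sum hm, eval_geom_sum]

theorem pow_choose_two_mul_qfact (hq : q ≠ 0) (hq2 : q ^ 2 ≠ 1) {n D : ℕ} (hn : n ≤ D) :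
    q ^ n.choose 2 * qfact q n = ∏ d ∈ Icc 2 D, (cyclotomic d ℂ).eval (q ^ 2) ^ (n / d) := by
  induction n with
  | zero => simp [qfact]
  | succ n ih =>
    calc q ^ (n + 1).choose 2 * qfact q (n + 1)
        = q ^ n.choose 2 * qfact q n * (q ^ (n + 1 - 1) * qint q (n + 1)) := by
          rw [qfact, prod_Icc_succ_top (by omega), ← qfact, Nat.choose_succ_succ',
            Nat.choose_one_right, Nat.add_sub_cancel]
          ring
      _ = _ := by
          rw [ih (by omega), pow_pred_mul_qint_eq_prod_cyclotomic hq hq2 (by omega),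
            prod_Icc_two_pow_add_one_div _ hn]

theorem pow_sum_choose_two_mul_prod_qfact (hq : q ≠ 0) (hq2 : q ^ 2 ≠ 1) {ι : Type*}
    (s : Finset ι) {n : ι → ℕ} {D : ℕ} (hn : ∀ i ∈ s, n i ≤ D) :
    q ^ (∑ i ∈ s, (n i).choose 2) * ∏ i ∈ s, qfact q (n i) =
      ∏ d ∈ Icc 2 D, (cyclotomic d ℂ).eval (q ^ 2) ^ (∑ i ∈ s, n i / d) := by
  simp only [← prod_pow_eq_pow_sum, ← prod_mul_distrib]
  rw [prod_congr rfl fun i hi => pow_choose_two_mul_qfact hq hq2 (hn i hi), prod_comm]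

end

theorem Finset.prod_zpow_natCast_sub_natCast {ι M₀ : Type*} [CommGroupWithZero M₀] {s : Finset ι}
    {f : ι → M₀} (hf : ∀ i ∈ s, f i ≠ 0) (m n : ι → ℕ) :
    ∏ i ∈ s, f i ^ ((m i : ℤ) - n i) = (∏ i ∈ s, f i ^ m i) / ∏ i ∈ s, f i ^ n i := by
  rw [← prod_div_distrib]
  exact prod_congr rfl fun i hi => by rw [zpow_sub₀ (hf i hi), zpow_natCast, zpow_natCast]

theorem Int.mul_one_sub_div_two_eq_neg_choose_two (n : ℕ) :
    (n : ℤ) * (1 - n) / 2 = -(n.choose 2 : ℕ) := by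
  have h : (n : ℤ) * (1 - n) = 2 * -(n.choose 2 : ℕ) := by
    rcases n with _ | n
    · simp
    · have h2 : ((n + 1) * n : ℤ) = (n + 1).choose 2 * 2 := by
        exact_mod_cast Nat.choose_one_right n ▸ Nat.add_one_mul_choose_eq n 1
      push_cast
      linear_combination -h2
  rw [h, Int.mul_ediv_cancel_left _ two_ne_zero]

theorem racah_summand_cyclotomic_representation_general (q : ℂ) (hq : q ≠ 0)
    (a : Fin 4 → ℕ) (b : Fin 3 → ℕ) (z : ℕ)
    (D : ℕ) (hD : D = max (z + 1) (max (b 0 - z) (max (b 1 - z) (b 2 - z))))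
    (hqd : ∀ d : ℕ, 1 ≤ d → d ≤ D → q ^ (2 * d) ≠ 1)
    (E : ℕ → ℤ)
    (hE : ∀ d : ℕ, E d = (((z + 1) / d : ℕ) : ℤ) -
      (∑ i, (((z - a i) / d : ℕ) : ℤ)) - ∑ y, (((b y - z) / d : ℕ) : ℤ))
    (P : ℤ)
    (hP : P = ((z : ℤ) + 1) * (-(z : ℤ)) / 2 -
      (∑ i, ((z - a i : ℕ) : ℤ) * (1 - ((z - a i : ℕ) : ℤ)) / 2) -
      ∑ y, ((b y - z : ℕ) : ℤ) * (1 - ((b y - z : ℕ) : ℤ)) / 2) :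
    racahSummand q a b z =
      (-1) ^ z * q ^ P *
        ∏ d ∈ Finset.Icc 2 D, (Polynomial.cyclotomic d ℂ).eval (q ^ 2) ^ (E d) := by
  have hq2 : q ^ 2 ≠ 1 := by simpa using hqd 1 le_rfl (by omega)
  have hΦ : ∀ d ∈ Icc 2 D, (cyclotomic d ℂ).eval (q ^ 2) ≠ 0 := fun d hd =>
    eval_cyclotomic_ne_zero_of_pow_ne_one <| by
      rw [← pow_mul]; exact hqd d (one_le_two.trans (mem_Icc.mp hd).1) (mem_Icc.mp hd).2
  have h0 := pow_choose_two_mul_qfact hq hq2 (n := z + 1) (D := D) (by omega)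
  have hA := pow_sum_choose_two_mul_prod_qfact hq hq2 univ (n := fun i => z - a i) (D := D)
    fun i _ => by omega
  have hB := pow_sum_choose_two_mul_prod_qfact hq hq2 univ (n := fun y => b y - z) (D := D)
    fun y _ => by fin_cases y <;> simp <;> omega
  have hP' : P = ((∑ i, (z - a i).choose 2 + ∑ y, (b y - z).choose 2 : ℕ) : ℤ) -
      ((z + 1).choose 2 : ℕ) := by
    have h1 : ((z : ℤ) + 1) * -(z : ℤ) = ((z + 1 : ℕ) : ℤ) * (1 - ((z + 1 : ℕ) : ℤ)) := by
      push_cast; ring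
    rw [hP, h1]
    simp only [Int.mul_one_sub_div_two_eq_neg_choose_two, sum_neg_distrib]
    push_cast; ring
  have hcyc : ∏ d ∈ Icc 2 D, (cyclotomic d ℂ).eval (q ^ 2) ^ E d =
      (∏ d ∈ Icc 2 D, (cyclotomic d ℂ).eval (q ^ 2) ^ ((z + 1) / d)) /
        ∏ d ∈ Icc 2 D,
          (cyclotomic d ℂ).eval (q ^ 2) ^ (∑ i, (z - a i) / d + ∑ y, (b y - z) / d) := by
    rw [← prod_zpow_natCast_sub_natCast hΦ]
    exact prod_congr rfl fun d _ => by rw [hE, sub_sub]; push_cast; rfl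
  rw [racahSummand, hP', zpow_sub₀ hq, zpow_natCast, zpow_natCast, hcyc, ← h0]
  simp only [pow_add, prod_mul_distrib]
  rw [← hA, ← hB]
  field_simp

/-- cyclotomic-exponent representation of the Racah summand:
`T_z = (−1)^z · q^{P(z)} · ∏_{d=2}^{D} Φ_d(q²)^{E_d(z)}` with
`E_d(z) = ⌊(z+1)/d⌋ − ∑_i ⌊(z−a_i)/d⌋ − ∑_y ⌊(b_y−z)/d⌋` and
`P(z) = (z+1)(−z)/2 − ∑_i (z−a_i)(1−(z−a_i))/2 − ∑_y (b_y−z)(1−(b_y−z))/2`. -/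
theorem racah_summand_cyclotomic_representation (q : ℂ) (hq : q ≠ 0)
    (a : Fin 4 → ℕ) (b : Fin 3 → ℕ) (z : ℕ)
    (ha : ∀ i, a i ≤ z) (hb : ∀ y, z ≤ b y)
    (D : ℕ) (hD : D = max (z + 1) (max (b 0 - z) (max (b 1 - z) (b 2 - z))))
    (hqd : ∀ d : ℕ, 1 ≤ d → d ≤ D → q ^ (2 * d) ≠ 1)
    (E : ℕ → ℤ)
    (hE : ∀ d : ℕ, E d = (((z + 1) / d : ℕ) : ℤ) -
      (∑ i, (((z - a i) / d : ℕ) : ℤ)) - ∑ y, (((b y - z) / d : ℕ) : ℤ))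
    (P : ℤ)
    (hP : P = ((z : ℤ) + 1) * (-(z : ℤ)) / 2 -
      (∑ i, ((z - a i : ℕ) : ℤ) * (1 - ((z - a i : ℕ) : ℤ)) / 2) -
      ∑ y, ((b y - z : ℕ) : ℤ) * (1 - ((b y - z : ℕ) : ℤ)) / 2) :
    racahSummand q a b z =
      (-1) ^ z * q ^ P *
        ∏ d ∈ Finset.Icc 2 D, (Polynomial.cyclotomic d ℂ).eval (q ^ 2) ^ (E d) :=
  racah_summand_cyclotomic_representation_general q hq a b z D hD hqd E hE P hP
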